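/- arXiv:1904.10723 — 5 statements merged into one kernel-verified Lean document; each statement's English description precedes it below -/
import Mathlib

section
/- Let G be a group, H ⊆ G a subgroup, and σ : G → G a group automorphism with σ ∘ σ = id. There exists a map μ : G/H → G/H with μ ∘ μ = id and μ(g·x) = σ(g)·μ(x) for all g ∈ G and x ∈ G/H if and only if there exists g ∈ G such that σ(H) = gHg⁻¹ and σ(g)·g ∈ H. -/
/-- Let `G` be a group, `H ⊆ G` a subgroup, and `σ : G → G` a group
automorphism with `σ ∘ σ = id`. There exists a map `μ : G/H → G/H` with `μ ∘ μ = id` and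
`μ(g • x) = σ(g) • μ(x)` for all `g ∈ G`, `x ∈ G/H`, if and only if there exists `g ∈ G`
such that `σ(H) = g H g⁻¹` and `σ(g) * g ∈ H`. -/
theorem exists_equivariant_real_structure_iff
    {G : Type*} [Group G] (H : Subgroup G) (σ : G ≃* G) (hσ : ∀ g : G, σ (σ g) = g) :
    (∃ μ : G ⧸ H → G ⧸ H, μ ∘ μ = id ∧ ∀ (g : G) (x : G ⧸ H), μ (g • x) = σ g • μ x) ↔
    (∃ g : G, Subgroup.map σ.toMonoidHom H = Subgroup.map (MulAut.conj g).toMonoidHom H ∧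
      σ g * g ∈ H) := by
  constructor
  · rintro ⟨μ, hinv, heq⟩
    obtain ⟨g, hg⟩ := QuotientGroup.mk_surjective (μ ((1 : G) : G ⧸ H))
    -- hg : ↑g = μ ↑1
    have hmu : ∀ a : G, μ ((a : G) : G ⧸ H) = ((σ a * g : G) : G ⧸ H) := by
      intro a
      have h1 : ((a : G) : G ⧸ H) = a • ((1 : G) : G ⧸ H) := by
        rw [MulAction.Quotient.smul_mk]; simp
      rw [h1, heq, ← hg, MulAction.Quotient.smul_mk]; rfl
    -- σ g * g ∈ H from involution
    have hk : σ g * g ∈ H := by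
      have h2 : μ (μ ((1 : G) : G ⧸ H)) = ((1 : G) : G ⧸ H) := congrFun hinv _
      rw [← hg, hmu] at h2
      have := (QuotientGroup.eq).mp h2
      simpa using (H.inv_mem this)
    have hA : ∀ h ∈ H, g⁻¹ * σ h * g ∈ H := by
      intro h hh
      have h1 : ((h : G) : G ⧸ H) = ((1 : G) : G ⧸ H) := by
        rw [QuotientGroup.eq]; simpa using H.inv_mem hh
      have h2 := congrArg μ h1
      rw [hmu, hmu] at h2
      have := (QuotientGroup.eq).mp h2
      have h3 : g⁻¹ * (σ h)⁻¹ * g ∈ H := by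
        simpa [mul_assoc, mul_inv_rev] using this
      simpa [mul_assoc] using H.inv_mem h3
    have hB : ∀ h ∈ H, σ g * σ h * (σ g)⁻¹ ∈ H := by
      intro h hh
      set k := σ g * g with hkdef
      have hgk : σ g = k * g⁻¹ := by rw [hkdef]; group
      have hgi : (σ g)⁻¹ = g * k⁻¹ := by rw [hkdef]; group
      rw [hgi, hgk]
      have : k * (g⁻¹ * σ h * g) * k⁻¹ ∈ H :=
        H.mul_mem (H.mul_mem hk (hA h hh)) (H.inv_mem hk)
      simpa [mul_assoc] using this
    refine ⟨g, ?_, hk⟩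
    ext x
    simp only [Subgroup.mem_map, MulEquiv.coe_toMonoidHom, MulAut.conj, MonoidHom.coe_mk,
      OneHom.coe_mk, MulEquiv.coe_mk, Equiv.coe_fn_mk]
    constructor
    · rintro ⟨h, hh, rfl⟩
      exact ⟨g⁻¹ * σ h * g, hA h hh, by group⟩
    · rintro ⟨h, hh, rfl⟩
      refine ⟨σ (g * h * g⁻¹), ?_, hσ _⟩
      have : σ g * σ h * (σ g)⁻¹ ∈ H := hB h hh
      simpa [map_mul, map_inv] using this
  · rintro ⟨g, hmap, hk⟩
    have hA : ∀ h ∈ H, g⁻¹ * σ h * g ∈ H := by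
      intro h hh
      have hx : σ h ∈ Subgroup.map (MulAut.conj g).toMonoidHom H := by
        rw [← hmap]; exact ⟨h, hh, rfl⟩
      obtain ⟨h', hh', he⟩ := hx
      have he' : g * h' * g⁻¹ = σ h := by simpa [MulAut.conj] using he
      have : h' = g⁻¹ * σ h * g := by rw [← he']; group
      rwa [← this]
    refine ⟨fun x => Quotient.liftOn' x (fun a => ((σ a * g : G) : G ⧸ H)) ?_, ?_, ?_⟩
    · intro a b hab
      have hab' : a⁻¹ * b ∈ H := QuotientGroup.leftRel_apply.mp hab
      apply (QuotientGroup.eq).mpr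
      have : g⁻¹ * σ (a⁻¹ * b) * g ∈ H := hA _ hab'
      simpa [map_mul, map_inv, mul_inv_rev, mul_assoc] using this
    · funext x
      induction x using QuotientGroup.induction_on with
      | H a =>
        show (((σ (σ a * g) * g : G)) : G ⧸ H) = ((a : G) : G ⧸ H)
        apply (QuotientGroup.eq).mpr
        have : a⁻¹ * (σ (σ a * g) * g) = σ g * g := by
          rw [map_mul, hσ]; group
        rw [show ((σ (σ a * g) * g))⁻¹ * a = (a⁻¹ * (σ (σ a * g) * g))⁻¹ by group, this]
        exact H.inv_mem hk
    · intro g' x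
      induction x using QuotientGroup.induction_on with
      | H a =>
        show ((σ (g' * a) * g : G) : G ⧸ H) = σ g' • ((σ a * g : G) : G ⧸ H)
        rw [MulAction.Quotient.smul_mk]
        congr 1
        rw [map_mul, smul_eq_mul, mul_assoc]
end

section
/- Let G be a group, H ⊆ G a subgroup, σ : G → G a group automorphism with σ ∘ σ = id, and g ∈ G such that σ(H) = gHg⁻¹ and σ(g)·g ∈ H. Then the assignment kH ↦ σ(k)gH is a well-defined map μ : G/H → G/H, and μ satisfies μ ∘ μ = id and μ(k·x) = σ(k)·μ(x) for all k ∈ G and x ∈ G/H; that is, μ is a (G,σ)-equivariant real structure on G/H. -/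
/-- Let `G` be a group, `H ⊆ G` a subgroup, `σ : G → G` a group automorphism
with `σ ∘ σ = id`, and `g ∈ G` such that `σ(H) = g H g⁻¹` and `σ(g) * g ∈ H`. Then the
assignment `kH ↦ σ(k) g H` is a well-defined map `μ : G/H → G/H`, and `μ` satisfies
`μ ∘ μ = id` and `μ(k • x) = σ(k) • μ(x)` for all `k ∈ G`, `x ∈ G/H`; i.e. `μ` is a
`(G,σ)`-equivariant real structure on `G/H`. -/
theorem equivariant_real_structure_of_cocycle
    {G : Type*} [Group G] (H : Subgroup G) (σ : G ≃* G) (hσ : ∀ g : G, σ (σ g) = g)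
    (g : G)
    (hH : Subgroup.map σ.toMonoidHom H = Subgroup.map (MulAut.conj g).toMonoidHom H)
    (hg : σ g * g ∈ H) :
    ∃ μ : G ⧸ H → G ⧸ H,
      (∀ k : G, μ (QuotientGroup.mk k) = QuotientGroup.mk (σ k * g)) ∧
      μ ∘ μ = id ∧
      ∀ (k : G) (x : G ⧸ H), μ (k • x) = σ k • μ x := by
  -- key: h ∈ H → g⁻¹ * σ h * g ∈ H
  have key : ∀ h ∈ H, g⁻¹ * σ h * g ∈ H := by
    intro h hh
    have : σ h ∈ Subgroup.map (MulAut.conj g).toMonoidHom H := by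
      rw [← hH]; exact ⟨h, hh, rfl⟩
    obtain ⟨h', hh', he⟩ := this
    have : σ h = g * h' * g⁻¹ := by
      simpa [MulAut.conj] using he.symm
    rw [this]
    group
    simpa using hh'
  refine ⟨Quotient.map' (fun k => σ k * g) ?_, fun k => rfl, ?_, ?_⟩
  · intro a b hab
    rw [QuotientGroup.leftRel_apply] at hab ⊢
    have := key _ hab
    simpa [mul_assoc] using this
  · funext x
    induction x using QuotientGroup.induction_on with
    | H k =>
      show QuotientGroup.mk (σ (σ k * g) * g) = QuotientGroup.mk k
      refine (QuotientGroup.eq).mpr ?_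
      simp only [map_mul, hσ]
      have h2 := H.inv_mem hg
      simpa [mul_assoc, mul_inv_rev] using h2
  · intro k x
    induction x using QuotientGroup.induction_on with
    | H m =>
      show QuotientGroup.mk (σ (k * m) * g) = σ k • QuotientGroup.mk (σ m * g)
      simp [QuotientGroup.mk_mul_of_mem, ← QuotientGroup.mk_mul, map_mul, mul_assoc]
end

section
/- Let H be a group, let θ be a group automorphism of H × H with θ ∘ θ = id which maps the first factor H × {1} onto the second factor {1} × H, and let σ₀ be any group automorphism of H with σ₀ ∘ σ₀ = id. Then there exists a group automorphism α of H × H such that α ∘ θ ∘ α⁻¹ is the automorphism (h₁,h₂) ↦ (σ₀(h₂), σ₀(h₁)). -/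
/-- Let `H` be a group, `θ` a group automorphism of `H × H` with
`θ ∘ θ = id` mapping the first factor `H × {1}` onto the second factor `{1} × H`, and let
`σ₀` be any involutive group automorphism of `H`. Then there is a group automorphism `α` of
`H × H` such that `α ∘ θ ∘ α⁻¹` is the automorphism `(h₁,h₂) ↦ (σ₀ h₂, σ₀ h₁)`. -/
theorem involution_swapping_factors_conjugate_to_twisted_swap
    {H : Type*} [Group H] (θ : (H × H) ≃* (H × H)) (hθ : ∀ p, θ (θ p) = p)
    (hswap : Subgroup.map θ.toMonoidHom
        (Subgroup.prod (⊤ : Subgroup H) (⊥ : Subgroup H)) =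
      Subgroup.prod (⊥ : Subgroup H) (⊤ : Subgroup H))
    (σ₀ : H ≃* H) (hσ₀ : ∀ h, σ₀ (σ₀ h) = h) :
    ∃ α : (H × H) ≃* (H × H), ∀ p : H × H, α (θ (α.symm p)) = (σ₀ p.2, σ₀ p.1) := by
  have h1 : ∀ h : H, (θ (h, 1)).1 = 1 := by
    intro h
    have hm : θ (h, 1) ∈ Subgroup.prod (⊥ : Subgroup H) (⊤ : Subgroup H) := by
      rw [← hswap]
      exact ⟨(h, 1), by simp [Subgroup.mem_prod], rfl⟩
    simpa using hm.1
  have h2 : ∀ k : H, (θ (1, k)).2 = 1 := by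
    intro k
    have hk : ((1 : H), k) ∈ Subgroup.map θ.toMonoidHom
        (Subgroup.prod (⊤ : Subgroup H) (⊥ : Subgroup H)) := by
      rw [hswap]; simp [Subgroup.mem_prod]
    obtain ⟨p, hp, hpk⟩ := hk
    have hp2 : p.2 = 1 := by simpa using hp.2
    have : θ ((1 : H), k) = p := by
      have := hθ p
      rw [show θ p = ((1 : H), k) from hpk] at this
      exact this
    rw [this, hp2]
  have e1 : ∀ h : H, θ (h, 1) = (1, (θ (h, 1)).2) := fun h =>
    Prod.ext (h1 h) rfl
  have e2 : ∀ k : H, θ (1, k) = ((θ (1, k)).1, 1) := fun k =>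
    Prod.ext rfl (h2 k)
  let ψ : H ≃* H :=
  { toFun := fun k => (θ (1, k)).1
    invFun := fun h => (θ (h, 1)).2
    left_inv := fun k => by
      have : θ ((θ (1, k)).1, 1) = (1, k) := by rw [← e2 k]; exact hθ _
      simp [this]
    right_inv := fun h => by
      have : θ (1, (θ (h, 1)).2) = (h, 1) := by rw [← e1 h]; exact hθ _
      simp [this]
    map_mul' := fun a b => by
      show (θ (1, a * b)).1 = (θ (1, a)).1 * (θ (1, b)).1
      have : ((1 : H), a * b) = ((1 : H), a) * ((1 : H), b) := by simp
      rw [this, map_mul]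
      rfl }
  refine ⟨(MulEquiv.refl H).prodCongr (ψ.trans σ₀), fun p => ?_⟩
  have hsymm : ∀ x : H, σ₀.symm x = σ₀ x := fun x => by
    conv_lhs => rw [← hσ₀ x]
    exact σ₀.symm_apply_apply _
  have key : ∀ a b : H, θ (a, b) = ((θ (1, b)).1, (θ (a, 1)).2) := by
    intro a b
    have : ((a : H), b) = (a, 1) * ((1 : H), b) := by simp
    rw [this, map_mul, e1 a, e2 b]
    simp
  have hαsymm : ((MulEquiv.refl H).prodCongr (ψ.trans σ₀)).symm p
      = (p.1, ψ.symm (σ₀.symm p.2)) := rfl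
  rw [hαsymm, key]
  have hψ : (θ ((1 : H), ψ.symm (σ₀.symm p.2))).1 = σ₀.symm p.2 :=
    ψ.apply_symm_apply _
  have hφ : σ₀ (ψ (θ (p.1, (1 : H))).2) = σ₀ p.1 := by
    rw [show ψ (θ (p.1, (1 : H))).2 = p.1 from ψ.apply_eq_iff_eq_symm_apply.mpr rfl]
  show ((θ ((1 : H), ψ.symm (σ₀.symm p.2))).1, σ₀ (ψ (θ (p.1, (1 : H))).2))
      = (σ₀ p.2, σ₀ p.1)
  rw [hψ, hφ, hsymm]
end

section
/- Consider the group ℂ* × ℂ* (where ℂ* is the multiplicative group of nonzero complex numbers) and the two maps θ₁(x,y) = (y,x) and θ₂(x,y) = (x²y⁻¹, x³y⁻²). Then θ₁ and θ₂ are both group automorphisms of ℂ* × ℂ* satisfying θᵢ ∘ θᵢ = id, their fixed-point subgroups coincide and both equal the diagonal subgroup {(t,t) | t ∈ ℂ*}, and yet θ₁ ≠ θ₂. -/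
def th2 : (ℂˣ × ℂˣ) ≃* (ℂˣ × ℂˣ) where
  toFun p := (p.1 ^ 2 * p.2⁻¹, p.1 ^ 3 * (p.2 ^ 2)⁻¹)
  invFun p := (p.1 ^ 2 * p.2⁻¹, p.1 ^ 3 * (p.2 ^ 2)⁻¹)
  left_inv p := by
    obtain ⟨x, y⟩ := p
    refine Prod.ext ?_ ?_ <;>
      · rw [Units.ext_iff]
        simp only [Units.val_mul, Units.val_pow_eq_pow_val, Units.val_inv_eq_inv_val]
        field_simp
  right_inv p := by
    obtain ⟨x, y⟩ := p
    refine Prod.ext ?_ ?_ <;>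
      · rw [Units.ext_iff]
        simp only [Units.val_mul, Units.val_pow_eq_pow_val, Units.val_inv_eq_inv_val]
        field_simp
  map_mul' p q := by
    refine Prod.ext ?_ ?_ <;>
      · rw [Units.ext_iff]
        simp only [Prod.fst_mul, Prod.snd_mul, Units.val_mul, Units.val_pow_eq_pow_val,
          Units.val_inv_eq_inv_val]
        field_simp

/-- On `ℂ* × ℂ*`, the maps `θ₁(x,y) = (y,x)` and
`θ₂(x,y) = (x²y⁻¹, x³y⁻²)` are both involutive group automorphisms, their fixed-point
subgroups coincide and equal the diagonal `{(t,t) | t ∈ ℂ*}`, and yet `θ₁ ≠ θ₂`. -/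
theorem two_involutions_same_fixed_points :
    ∃ θ₁ θ₂ : (ℂˣ × ℂˣ) ≃* (ℂˣ × ℂˣ),
      (∀ p : ℂˣ × ℂˣ, θ₁ p = (p.2, p.1)) ∧
      (∀ p : ℂˣ × ℂˣ, θ₂ p = (p.1 ^ 2 * p.2⁻¹, p.1 ^ 3 * (p.2 ^ 2)⁻¹)) ∧
      (∀ p, θ₁ (θ₁ p) = p) ∧
      (∀ p, θ₂ (θ₂ p) = p) ∧
      {p : ℂˣ × ℂˣ | θ₁ p = p} = {p : ℂˣ × ℂˣ | ∃ t : ℂˣ, p = (t, t)} ∧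
      {p : ℂˣ × ℂˣ | θ₂ p = p} = {p : ℂˣ × ℂˣ | ∃ t : ℂˣ, p = (t, t)} ∧
      θ₁ ≠ θ₂ := by
  refine ⟨MulEquiv.prodComm, th2, fun p => rfl, fun p => rfl, fun p => rfl,
    fun p => th2.left_inv p, ?_, ?_, ?_⟩
  · ext p
    constructor
    · intro h
      have h1 : p.2 = p.1 := congrArg Prod.fst h
      exact ⟨p.1, by rw [Prod.ext_iff]; exact ⟨rfl, h1⟩⟩
    · rintro ⟨t, rfl⟩
      rfl
  · ext p
    constructor
    · intro h
      have h1 : p.1 ^ 2 * p.2⁻¹ = p.1 := congrArg Prod.fst h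
      rw [mul_inv_eq_iff_eq_mul, sq] at h1
      have hxy : p.1 = p.2 := mul_left_cancel h1
      exact ⟨p.1, by rw [Prod.ext_iff]; exact ⟨rfl, hxy.symm⟩⟩
    · rintro ⟨t, rfl⟩
      show ((t ^ 2 * t⁻¹ : ℂˣ), (t ^ 3 * (t ^ 2)⁻¹ : ℂˣ)) = (t, t)
      refine Prod.ext ?_ ?_ <;>
        · rw [Units.ext_iff]
          simp only [Units.val_mul, Units.val_pow_eq_pow_val, Units.val_inv_eq_inv_val]
          field_simp
  · intro h
    have := congrArg (fun f : (ℂˣ × ℂˣ) ≃* (ℂˣ × ℂˣ) => (f (Units.mk0 2 two_ne_zero, 1)).1) h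
    simp [th2, Units.ext_iff] at this
    norm_num at this
end

section
/- Let n ≥ 2 and regard the symplectic group Sp_{2n}(ℂ) = {g | ᵗg·J·g = J} as a subgroup of SL_{2n}(ℂ). Then the normalizer of Sp_{2n}(ℂ) in SL_{2n}(ℂ) equals the subgroup generated by the center of SL_{2n}(ℂ) together with Sp_{2n}(ℂ). -/
open Matrix

/-- The standard symplectic matrix `J = [[0, Iₙ],[-Iₙ, 0]]`. -/
def Jmat (n : ℕ) : Matrix (Fin n ⊕ Fin n) (Fin n ⊕ Fin n) ℂ :=
  Matrix.fromBlocks 0 1 (-1) 0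

/-- The symplectic group `Sp₂ₙ(ℂ) = {g | ᵗg ⬝ J ⬝ g = J}`, as a subgroup of `SL₂ₙ(ℂ)`. -/
def Sp (n : ℕ) : Subgroup (Matrix.SpecialLinearGroup (Fin n ⊕ Fin n) ℂ) where
  carrier := {g | g.valᵀ * Jmat n * g.val = Jmat n}
  one_mem' := by simp [Matrix.SpecialLinearGroup.coe_one]
  mul_mem' := by
    intro a b ha hb
    simp only [Set.mem_setOf_eq] at *
    show (a * b).valᵀ * Jmat n * (a * b).val = Jmat n
    have hab : (a * b).val = a.val * b.val := rfl
    rw [hab, Matrix.transpose_mul]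
    calc b.valᵀ * a.valᵀ * Jmat n * (a.val * b.val)
        = b.valᵀ * (a.valᵀ * Jmat n * a.val) * b.val := by
          simp only [Matrix.mul_assoc]
      _ = Jmat n := by rw [ha, hb]
  inv_mem' := by
    intro a ha
    simp only [Set.mem_setOf_eq] at *
    have h1 : a.val * (a⁻¹).val = 1 := congrArg Subtype.val (mul_inv_cancel a)
    calc (a⁻¹).valᵀ * Jmat n * (a⁻¹).val
        = (a⁻¹).valᵀ * (a.valᵀ * Jmat n * a.val) * (a⁻¹).val := by rw [ha]
      _ = (a.val * (a⁻¹).val)ᵀ * Jmat n * (a.val * (a⁻¹).val) := by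
          rw [Matrix.transpose_mul]
          simp only [Matrix.mul_assoc]
      _ = Jmat n := by rw [h1]; simp

/-!
If `g` normalises `Sp₂ₙ`, the form `M = gᵀ J g` is invariant under congruence by every symplectic
matrix. Invariance under `J` and under the shears `[[1, B], [0, 1]]`, `B` symmetric, forces
`M = c • J`, because a matrix commuting with all symmetric matrices is scalar; and `c ≠ 0` since
`det M = det J`. For `ν² = c⁻¹` the matrix `ν • g` is symplectic, hence of determinant one, so
`ν ^ 2n = 1`, the scalar `ν⁻¹` lies in the centre of `SL₂ₙ`, and `g = ν⁻¹ • (ν • g)`.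
-/

section

variable {l R : Type*} [DecidableEq l] [Fintype l] [CommRing R]

theorem Matrix.mem_range_scalar_of_forall_isSymm_commute {Q : Matrix l l R}
    (h : ∀ B : Matrix l l R, B.IsSymm → Commute B Q) : Q ∈ Set.range (scalar l) := by
  refine mem_range_scalar_of_commute_single fun i j hij => ?_
  have hdiag (k : l) : (single k k (1 : R)).IsSymm := transpose_single k k 1
  have hfactor : single i j (1 : R) =
      single i i 1 * (single i j 1 + (single i j 1)ᵀ) * single j j 1 := by
    rw [transpose_single, mul_add, single_mul_single_same, single_mul_single_of_ne (h := hij),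
      add_zero, single_mul_single_same, one_mul, one_mul]
  show Commute (single i j 1) Q
  rw [hfactor]
  exact ((h _ (hdiag i)).mul_left (h _ (isSymm_add_transpose_self _))).mul_left (h _ (hdiag j))

theorem Matrix.fromBlocks_one_mem_symplecticGroup {B : Matrix l l R} (hB : B.IsSymm) :
    fromBlocks 1 B 0 1 ∈ symplecticGroup l R := by
  simp [SymplecticGroup.fromBlocks_mem_iff, hB.eq]

theorem Matrix.exists_eq_smul_J_of_forall_transpose_mul_mul_eq {M : Matrix (l ⊕ l) (l ⊕ l) R}
    (hM : ∀ A ∈ symplecticGroup l R, Aᵀ * M * A = M) : ∃ c : R, M = c • J l R := by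
  obtain ⟨P, Q, S, T, rfl⟩ : ∃ P Q S T, M = fromBlocks P Q S T :=
    ⟨_, _, _, _, (fromBlocks_toBlocks M).symm⟩
  have hJ := hM _ (SymplecticGroup.J_mem l R)
  have hU (B : Matrix l l R) (hB : B.IsSymm) := hM _ (fromBlocks_one_mem_symplecticGroup hB)
  simp only [J, fromBlocks_transpose, fromBlocks_multiply, fromBlocks_inj, transpose_zero,
    transpose_one, transpose_neg, Matrix.zero_mul, Matrix.mul_zero, Matrix.one_mul,
    Matrix.mul_one, Matrix.neg_mul, Matrix.mul_neg, zero_add, add_zero] at hJ hU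
  obtain ⟨hTP, hSQ, -, -⟩ := hJ
  subst hTP hSQ
  obtain rfl : T = 0 := by simpa using (hU 1 isSymm_one).2.1
  obtain ⟨c, rfl⟩ := mem_range_scalar_of_forall_isSymm_commute fun B hB => by
    have h := (hU B hB).2.2.2
    simp only [hB.eq, Matrix.mul_zero, zero_add, add_zero, Matrix.mul_neg] at h
    exact (add_neg_eq_zero.mp h).symm
  exact ⟨c, by simp [J, fromBlocks_smul, smul_one_eq_diagonal]⟩

theorem Matrix.exists_smul_mem_symplecticGroup_of_transpose_mul_J_mul_eq_smul
    {K : Type*} [Field K] [IsAlgClosed K] {A : Matrix (l ⊕ l) (l ⊕ l) K} {c : K} (hc : c ≠ 0)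
    (hA : Aᵀ * J l K * A = c • J l K) : ∃ ν : K, ν ≠ 0 ∧ ν • A ∈ symplecticGroup l K := by
  obtain ⟨ν, hν⟩ := IsAlgClosed.exists_pow_nat_eq c⁻¹ two_pos
  refine ⟨ν, fun h => by simp_all, SymplecticGroup.mem_iff'.2 ?_⟩
  rw [transpose_smul, smul_mul_assoc, mul_smul_comm, Matrix.smul_mul, hA, smul_smul, smul_smul,
    ← sq, hν, inv_mul_cancel₀ hc, one_smul]

end

theorem Jmat_eq_neg_J (n : ℕ) : Jmat n = -J (Fin n) ℂ := by
  simp [Jmat, J, fromBlocks_neg]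

theorem mem_Sp_iff {n : ℕ} {g : Matrix.SpecialLinearGroup (Fin n ⊕ Fin n) ℂ} :
    g ∈ Sp n ↔ g.val ∈ symplecticGroup (Fin n) ℂ := by
  rw [SymplecticGroup.mem_iff', ← neg_inj]
  show _ = Jmat n ↔ _
  simp [Jmat_eq_neg_J]

theorem forall_transpose_mul_mul_eq_of_mem_normalizer_Sp {n : ℕ}
    {g : Matrix.SpecialLinearGroup (Fin n ⊕ Fin n) ℂ}
    (hg : g ∈ Subgroup.normalizer (Sp n : Set _)) :
    ∀ A ∈ symplecticGroup (Fin n) ℂ,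
      Aᵀ * (g.valᵀ * J (Fin n) ℂ * g.val) * A = g.valᵀ * J (Fin n) ℂ * g.val := by
  intro A hA
  let s : Matrix.SpecialLinearGroup (Fin n ⊕ Fin n) ℂ := ⟨A, SymplecticGroup.det_eq_one hA⟩
  have hsA : s.val = A := rfl
  have hs := SymplecticGroup.mem_iff'.1 (mem_Sp_iff.1 ((hg s).1 (mem_Sp_iff.2 hA)))
  calc Aᵀ * (g.valᵀ * J (Fin n) ℂ * g.val) * A
      = (g * s).valᵀ * J (Fin n) ℂ * (g * s).val := by
        rw [Matrix.SpecialLinearGroup.coe_mul, hsA]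
        simp only [transpose_mul, Matrix.mul_assoc]
    _ = (g * s * g⁻¹ * g).valᵀ * J (Fin n) ℂ * (g * s * g⁻¹ * g).val := by
        rw [inv_mul_cancel_right]
    _ = g.valᵀ * ((g * s * g⁻¹).valᵀ * J (Fin n) ℂ * (g * s * g⁻¹).val) * g.val := by
        rw [Matrix.SpecialLinearGroup.coe_mul (g * s * g⁻¹)]
        simp only [transpose_mul, Matrix.mul_assoc]
    _ = g.valᵀ * J (Fin n) ℂ * g.val := by rw [hs]

theorem mem_center_sup_Sp_of_smul_mem_symplecticGroup {n : ℕ}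
    {g : Matrix.SpecialLinearGroup (Fin n ⊕ Fin n) ℂ} {ν : ℂ} (hν : ν ≠ 0)
    (h : ν • g.val ∈ symplecticGroup (Fin n) ℂ) :
    g ∈ Subgroup.center (Matrix.SpecialLinearGroup (Fin n ⊕ Fin n) ℂ) ⊔ Sp n := by
  have hdet : (ν • g.val).det = 1 := SymplecticGroup.det_eq_one h
  have hpow : ν⁻¹ ^ Fintype.card (Fin n ⊕ Fin n) = 1 := by
    rw [det_smul, g.prop, mul_one] at hdet
    rw [inv_pow, hdet, inv_one]
  let s : Matrix.SpecialLinearGroup (Fin n ⊕ Fin n) ℂ := ⟨ν • g.val, hdet⟩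
  let z : Matrix.SpecialLinearGroup (Fin n ⊕ Fin n) ℂ := ⟨scalar _ ν⁻¹, by
    rw [scalar_apply, det_diagonal, Finset.prod_const, Finset.card_univ, hpow]⟩
  have hz : z ∈ Subgroup.center _ := Matrix.SpecialLinearGroup.mem_center_iff.2 ⟨ν⁻¹, hpow, rfl⟩
  have hgzs : g = z * s := Subtype.ext <| by
    show g.val = scalar _ ν⁻¹ * (ν • g.val)
    rw [scalar_apply, ← smul_eq_diagonal_mul, smul_smul, inv_mul_cancel₀ hν, one_smul]
  rw [hgzs]
  exact Subgroup.mul_mem_sup hz (mem_Sp_iff.2 h)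

theorem normalizer_Sp_eq_center_sup_Sp_general (n : ℕ) :
    Subgroup.normalizer ((Sp n : Subgroup (Matrix.SpecialLinearGroup (Fin n ⊕ Fin n) ℂ)) : Set (Matrix.SpecialLinearGroup (Fin n ⊕ Fin n) ℂ)) =
      Subgroup.center (Matrix.SpecialLinearGroup (Fin n ⊕ Fin n) ℂ) ⊔ Sp n := by
  refine le_antisymm (fun g hg => ?_)
    (sup_le (Subgroup.center_le_normalizer _) Subgroup.le_normalizer)
  rcases isEmpty_or_nonempty (Fin n) with _ | _
  · exact Subsingleton.elim g 1 ▸ Subgroup.one_mem _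
  obtain ⟨c, hc⟩ := exists_eq_smul_J_of_forall_transpose_mul_mul_eq
    (forall_transpose_mul_mul_eq_of_mem_normalizer_Sp hg)
  have hc0 : c ≠ 0 := by
    rintro rfl
    have hdet := congrArg det hc
    rw [zero_smul, det_zero, det_mul, det_mul, det_transpose, g.prop, one_mul, mul_one] at hdet
    exact (isUnit_det_J _ _).ne_zero hdet
  obtain ⟨ν, hν, hνg⟩ := exists_smul_mem_symplecticGroup_of_transpose_mul_J_mul_eq_smul hc0 hc
  exact mem_center_sup_Sp_of_smul_mem_symplecticGroup hν hνg

/-- For `n ≥ 2`, the normalizer of the symplectic group `Sp₂ₙ(ℂ)` in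
`SL₂ₙ(ℂ)` equals the subgroup generated by the center of `SL₂ₙ(ℂ)` together with
`Sp₂ₙ(ℂ)`. -/
theorem normalizer_Sp_eq_center_sup_Sp (n : ℕ) (hn : 2 ≤ n) :
    Subgroup.normalizer ((Sp n : Subgroup (Matrix.SpecialLinearGroup (Fin n ⊕ Fin n) ℂ)) : Set (Matrix.SpecialLinearGroup (Fin n ⊕ Fin n) ℂ)) =
      Subgroup.center (Matrix.SpecialLinearGroup (Fin n ⊕ Fin n) ℂ) ⊔ Sp n :=
  normalizer_Sp_eq_center_sup_Sp_general n
end
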